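/- If G is a finite nilpotent group of odd order greater than 5 and G is not a 3-group, then o(G) ≥ o(C5 × C5) = 4.84. -/
import Mathlib

open Finset

/-- `psi G` is the sum of the orders of the elements of `G`. -/
noncomputable def psi (G : Type*) [Group G] : ℕ := ∑ᶠ x : G, orderOf x

lemma psi_eq_sum (G : Type*) [Group G] [Fintype G] : psi G = ∑ x : G, orderOf x :=
  finsum_eq_sum_of_fintype _

lemma psi_congr {G H : Type*} [Group G] [Group H] [Fintype G] [Fintype H] (e : G ≃* H) :
    psi G = psi H := by
  rw [psi_eq_sum, psi_eq_sum, ← Equiv.sum_comp e.toEquiv (fun y => orderOf y)]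
  exact Finset.sum_congr rfl fun x _ => (orderOf_injective e.toMonoidHom e.injective x).symm

lemma nat_prod_dvd {ι : Type*} (s : Finset ι) (f : ι → ℕ) (n : ℕ)
    (hc : ∀ i ∈ s, ∀ j ∈ s, i ≠ j → Nat.Coprime (f i) (f j))
    (hd : ∀ i ∈ s, f i ∣ n) : ∏ i ∈ s, f i ∣ n := by
  classical
  induction s using Finset.induction with
  | empty => simp
  | @insert a s ha ih =>
    rw [Finset.prod_insert ha]
    have hcop : Nat.Coprime (f a) (∏ i ∈ s, f i) :=
      Nat.Coprime.prod_right fun j hj =>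
        hc a (Finset.mem_insert_self a s) j (Finset.mem_insert_of_mem hj)
          (fun h => ha (h ▸ hj))
    exact hcop.mul_dvd_of_dvd_of_dvd (hd a (Finset.mem_insert_self a s))
      (ih (fun i hi j hj hij => hc i (Finset.mem_insert_of_mem hi) j
        (Finset.mem_insert_of_mem hj) hij)
        (fun i hi => hd i (Finset.mem_insert_of_mem hi)))

lemma orderOf_pi {ι : Type*} [Fintype ι] {K : ι → Type*} [∀ i, Group (K i)] [∀ i, Fintype (K i)]
    (hcop : ∀ i j, i ≠ j → Nat.Coprime (Nat.card (K i)) (Nat.card (K j)))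
    (f : ∀ i, K i) : orderOf f = ∏ i, orderOf (f i) := by
  classical
  have hdvd : ∀ i, orderOf (f i) ∣ orderOf f := by
    intro i
    apply orderOf_dvd_of_pow_eq_one
    have h := pow_orderOf_eq_one f
    have : (f ^ orderOf f) i = (1 : ∀ i, K i) i := by rw [h]
    simpa using this
  apply Nat.dvd_antisymm
  · apply orderOf_dvd_of_pow_eq_one
    funext i
    have : orderOf (f i) ∣ ∏ j, orderOf (f j) := Finset.dvd_prod_of_mem _ (Finset.mem_univ i)
    simpa using orderOf_dvd_iff_pow_eq_one.mp this
  · apply nat_prod_dvd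
    · intro i _ j _ hij
      exact Nat.Coprime.coprime_dvd_left (orderOf_dvd_natCard (f i))
        (Nat.Coprime.coprime_dvd_right (orderOf_dvd_natCard (f j)) (hcop i j hij))
    · intro i _
      exact hdvd i

lemma psi_pi {ι : Type*} [Fintype ι] [DecidableEq ι] (K : ι → Type*) [∀ i, Group (K i)]
    [∀ i, Fintype (K i)]
    (hcop : ∀ i j, i ≠ j → Nat.Coprime (Nat.card (K i)) (Nat.card (K j))) :
    psi (∀ i, K i) = ∏ i, psi (K i) := by
  simp_rw [psi_eq_sum, Fintype.prod_sum (fun i (x : K i) => orderOf x)]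
  exact Finset.sum_congr rfl fun f _ => orderOf_pi hcop f

lemma psi_lower (G : Type*) [Group G] [Fintype G] (m : ℕ)
    (h : ∀ x : G, x ≠ 1 → m ≤ orderOf x) :
    1 + (Nat.card G - 1) * m ≤ psi G := by
  classical
  rw [psi_eq_sum, ← Finset.add_sum_erase _ _ (Finset.mem_univ (1 : G)), orderOf_one]
  have h2 : (Finset.univ.erase (1 : G)).card • m ≤ ∑ x ∈ Finset.univ.erase (1 : G), orderOf x :=
    Finset.card_nsmul_le_sum _ _ _ fun x hx => h x (Finset.ne_of_mem_erase hx)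
  rw [Finset.card_erase_of_mem (Finset.mem_univ _), Finset.card_univ, smul_eq_mul] at h2
  rw [Nat.card_eq_fintype_card]
  omega

lemma nilpotent_decomp (G : Type*) [Group G] [Finite G] [Group.IsNilpotent G] :
    ∃ (c q : ℕ → ℕ),
      Nat.card G = ∏ p ∈ (Nat.card G).primeFactors, c p ∧
      psi G = ∏ p ∈ (Nat.card G).primeFactors, q p ∧
      (∀ p ∈ (Nat.card G).primeFactors, ∃ a, c p = p ^ a) ∧
      (∀ p ∈ (Nat.card G).primeFactors, p ≤ c p) ∧
      (∀ p ∈ (Nat.card G).primeFactors, 1 + (c p - 1) * p ≤ q p) := by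
  classical
  haveI : Fintype G := Fintype.ofFinite G
  haveI hfs : ∀ p : ℕ, Finite (Sylow p G) :=
    fun p => Finite.of_injective (fun P : Sylow p G => (P : Subgroup G))
      (fun _ _ h => Sylow.ext h)
  haveI : ∀ p : ℕ, Fintype (Sylow p G) := fun p => Fintype.ofFinite _
  set S := (Nat.card G).primeFactors with hSdef
  set K : ℕ → Type _ := fun p => ∀ P : Sylow p G, (P : Subgroup G) with hK
  have hppow : ∀ p ∈ S, ∃ a, Nat.card (K p) = p ^ a := by
    intro p hp
    haveI : Fact p.Prime := ⟨Nat.prime_of_mem_primeFactors hp⟩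
    refine ⟨(Nat.card G).factorization p * Fintype.card (Sylow p G), ?_⟩
    rw [hK]
    rw [Nat.card_pi]
    calc ∏ P : Sylow p G, Nat.card (P : Subgroup G)
        = ∏ _P : Sylow p G, p ^ (Nat.card G).factorization p :=
          Finset.prod_congr rfl fun P _ => P.card_eq_multiplicity
      _ = (p ^ (Nat.card G).factorization p) ^ Fintype.card (Sylow p G) := by
          rw [Finset.prod_const, Finset.card_univ]
      _ = p ^ ((Nat.card G).factorization p * Fintype.card (Sylow p G)) := by
          rw [← pow_mul]
  have hge : ∀ p ∈ S, p ≤ Nat.card (K p) := by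
    intro p hp
    haveI hFp : Fact p.Prime := ⟨Nat.prime_of_mem_primeFactors hp⟩
    obtain ⟨P⟩ : Nonempty (Sylow p G) := inferInstance
    have h1 : Nat.card (P : Subgroup G) ≤ Nat.card (K p) := by
      rw [hK, Nat.card_pi]
      exact Finset.single_le_prod' (f := fun Q : Sylow p G => Nat.card (Q : Subgroup G))
        (fun Q _ => Nat.card_pos) (Finset.mem_univ P)
    have h2 : p ≤ Nat.card (P : Subgroup G) := by
      rw [P.card_eq_multiplicity]
      have hk : 1 ≤ (Nat.card G).factorization p :=
        hFp.out.factorization_pos_of_dvd Nat.card_pos.ne'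
          (Nat.dvd_of_mem_primeFactors hp)
      calc p = p ^ 1 := (pow_one p).symm
        _ ≤ p ^ (Nat.card G).factorization p := Nat.pow_le_pow_right hFp.out.pos hk
    exact h2.trans h1
  have hcop : ∀ p ∈ S, ∀ p' ∈ S, p ≠ p' → Nat.Coprime (Nat.card (K p)) (Nat.card (K p')) := by
    intro p hp p' hp' hne
    obtain ⟨a, ha⟩ := hppow p hp
    obtain ⟨b, hb⟩ := hppow p' hp'
    rw [ha, hb]
    exact Nat.Coprime.pow _ _ ((Nat.coprime_primes (Nat.prime_of_mem_primeFactors hp)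
      (Nat.prime_of_mem_primeFactors hp')).mpr hne)
  have hψ : ∀ p ∈ S, 1 + (Nat.card (K p) - 1) * p ≤ psi (K p) := by
    intro p hp
    haveI hFp : Fact p.Prime := ⟨Nat.prime_of_mem_primeFactors hp⟩
    apply psi_lower
    intro x hx
    obtain ⟨a, ha⟩ := hppow p hp
    have hdvd : orderOf x ∣ p ^ a := ha ▸ orderOf_dvd_natCard x
    obtain ⟨b, hb, heq⟩ := (Nat.dvd_prime_pow hFp.out).mp hdvd
    have hb0 : b ≠ 0 := by
      rintro rfl
      exact hx (orderOf_eq_one_iff.mp (by simpa using heq))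
    rw [heq]
    exact Nat.le_self_pow hb0 p
  -- the equivalence
  obtain ⟨e⟩ := ((isNilpotent_of_finite_tfae (G := G)).out 0 4).mp ‹Group.IsNilpotent G›
  refine ⟨fun p => Nat.card (K p), fun p => psi (K p), ?_, ?_, hppow, hge, hψ⟩
  · rw [← Finset.prod_coe_sort S (fun p => Nat.card (K p))]
    calc Nat.card G = Nat.card (∀ p : S, K p) := Nat.card_congr e.toEquiv.symm
      _ = ∏ p : S, Nat.card (K p) := Nat.card_pi
  · rw [← Finset.prod_coe_sort S (fun p => psi (K p))]
    have h1 : psi G = psi (∀ p : S, K p) := psi_congr e.symm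
    rw [h1]
    exact psi_pi (fun p : S => K p.1)
      (fun i j hij => hcop i i.2 j j.2 (fun h => hij (Subtype.ext h)))


lemma arith (S : Finset ℕ) (c q : ℕ → ℕ) (p1 p2 : ℕ) (h1 : p1 ∈ S) (h2 : p2 ∈ S)
    (hne : p1 ≠ p2) (hb1 : 2 * c p1 ≤ q p1) (hb2 : 21 * c p2 ≤ 5 * q p2)
    (hcq : ∀ p ∈ S, c p ≤ q p) :
    121 * ∏ p ∈ S, c p ≤ 25 * ∏ p ∈ S, q p := by
  classical
  have h2' : p2 ∈ S.erase p1 := Finset.mem_erase.mpr ⟨hne.symm, h2⟩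
  rw [← Finset.mul_prod_erase S c h1, ← Finset.mul_prod_erase S q h1,
    ← Finset.mul_prod_erase _ c h2', ← Finset.mul_prod_erase _ q h2']
  set X := ∏ p ∈ (S.erase p1).erase p2, c p
  set Y := ∏ p ∈ (S.erase p1).erase p2, q p
  have hXY : X ≤ Y := Finset.prod_le_prod' fun i hi =>
    hcq i (Finset.mem_of_mem_erase (Finset.mem_of_mem_erase hi))
  calc 121 * (c p1 * (c p2 * X)) ≤ 210 * (c p1 * (c p2 * X)) :=
        Nat.mul_le_mul_right _ (by norm_num)
    _ = (2 * c p1) * ((21 * c p2) * (5 * X)) := by ring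
    _ ≤ q p1 * ((5 * q p2) * (5 * Y)) :=
        Nat.mul_le_mul hb1 (Nat.mul_le_mul hb2 (Nat.mul_le_mul_left 5 hXY))
    _ = 25 * (q p1 * (q p2 * Y)) := by ring


/-- `avgO G` is the average order of the elements of `G`. -/
noncomputable def avgO (G : Type*) [Group G] : ℚ := psi G / Nat.card G

theorem avgO_nilpotent_odd_not_three_group {G : Type*} [Group G] [Finite G]
    [Group.IsNilpotent G] (hodd : Odd (Nat.card G)) (hcard : 5 < Nat.card G)
    (h3 : ¬ IsPGroup 3 G) :
    (121/25 : ℚ) ≤ avgO G := by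
  classical
  obtain ⟨c, q, hcardeq, hpsi, hpow, hge, hq⟩ := nilpotent_decomp G
  set n := Nat.card G with hn
  set S := n.primeFactors with hS
  have hprime : ∀ p ∈ S, Nat.Prime p := fun p hp => Nat.prime_of_mem_primeFactors hp
  have hoddp : ∀ p ∈ S, p ≠ 2 := by
    intro p hp h2
    rw [Nat.odd_iff] at hodd
    have := Nat.dvd_of_mem_primeFactors hp
    rw [h2] at this
    omega
  have hp3 : ∀ p ∈ S, 3 ≤ p := by
    intro p hp
    have := (hprime p hp).two_le
    have := hoddp p hp
    omega
  have hp5 : ∀ p ∈ S, p ≠ 3 → 5 ≤ p := by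
    intro p hp hne
    have h2 := (hprime p hp).two_le
    have h4 : p ≠ 4 := by
      intro h; rw [h] at hp; exact absurd (hprime 4 hp) (by norm_num)
    have := hoddp p hp
    omega
  have hcq : ∀ p ∈ S, c p ≤ q p := by
    intro p hp
    have h1 := hq p hp
    have h2 := hge p hp
    have h3' := hp3 p hp
    have : (c p - 1) * 1 ≤ (c p - 1) * p := Nat.mul_le_mul_left _ (by omega)
    omega
  have hb2gen : ∀ p ∈ S, 5 ≤ p → 21 * c p ≤ 5 * q p := by
    intro p hp h5
    have h1 := hq p hp
    have h2 := hge p hp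
    have : (c p - 1) * 5 ≤ (c p - 1) * p := Nat.mul_le_mul_left _ h5
    omega
  have hkey : 121 * n ≤ 25 * psi G := by
    by_cases h3S : 3 ∈ S
    · have hex : ∃ p2 ∈ S, p2 ≠ 3 := by
        by_contra h
        push_neg at h
        apply h3
        have hS3 : S = {3} := Finset.eq_singleton_iff_unique_mem.mpr ⟨h3S, h⟩
        obtain ⟨a, ha⟩ := hpow 3 h3S
        have hna : n = 3 ^ a := by rw [hcardeq, hS3, Finset.prod_singleton, ha]
        haveI : Fact (Nat.Prime 3) := ⟨by norm_num⟩
        exact IsPGroup.iff_card.mpr ⟨a, hna⟩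
      obtain ⟨p2, hp2S, hp2ne⟩ := hex
      have hb1 : 2 * c 3 ≤ q 3 := by
        have h1 := hq 3 h3S
        have h2 := hge 3 h3S
        omega
      rw [hcardeq, hpsi]
      exact arith S c q 3 p2 h3S hp2S (fun h => hp2ne h.symm) hb1
        (hb2gen p2 hp2S (hp5 p2 hp2S hp2ne)) hcq
    · have hall5 : ∀ p ∈ S, 5 ≤ p := fun p hp => hp5 p hp (fun h => h3S (h ▸ hp))
      have hb1gen : ∀ p ∈ S, 2 * c p ≤ q p := by
        intro p hp
        have := hb2gen p hp (hall5 p hp)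
        have := hcq p hp
        omega
      by_cases hex : ∃ p1 ∈ S, ∃ p2 ∈ S, p1 ≠ p2
      · obtain ⟨p1, h1, p2, h2, hne⟩ := hex
        rw [hcardeq, hpsi]
        exact arith S c q p1 p2 h1 h2 hne (hb1gen p1 h1)
          (hb2gen p2 h2 (hall5 p2 h2)) hcq
      · push_neg at hex
        obtain ⟨p, hpS0⟩ := Nat.nonempty_primeFactors.mpr (by omega : 1 < n)
        have hpS : p ∈ S := hpS0
        have hS1 : S = {p} := Finset.eq_singleton_iff_unique_mem.mpr
          ⟨hpS, fun x hx => hex x hx p hpS⟩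
        have hnc : n = c p := by rw [hcardeq, hS1, Finset.prod_singleton]
        have hpq : psi G = q p := by rw [hpsi, hS1, Finset.prod_singleton]
        have hqp := hq p hpS
        have hgep := hge p hpS
        rw [hpq, hnc]
        by_cases hp7 : 7 ≤ p
        · have h7 : (c p - 1) * 7 ≤ (c p - 1) * p := Nat.mul_le_mul_left _ hp7
          omega
        · have hpe5 : p = 5 := by
            have h5 := hall5 p hpS
            have h6 : p ≠ 6 := by
              intro h; rw [h] at hpS; exact absurd (hprime 6 hpS) (by norm_num)
            omega
          subst hpe5
          obtain ⟨a, ha⟩ := hpow 5 hpS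
          have h25 : 25 ≤ c 5 := by
            have ha2 : 2 ≤ a := by
              by_contra hlt
              push_neg at hlt
              have hc5 : c 5 ≤ 5 := by
                interval_cases a
                · rw [ha]; norm_num
                · rw [ha]; norm_num
              omega
            calc (25 : ℕ) = 5 ^ 2 := by norm_num
              _ ≤ 5 ^ a := Nat.pow_le_pow_right (by norm_num) ha2
              _ = c 5 := ha.symm
          omega
  -- conclude
  have hn0 : (0:ℚ) < (n:ℚ) := by exact Nat.cast_pos.mpr (by omega)
  rw [avgO, ← hn, div_le_div_iff₀ (by norm_num) hn0]
  exact_mod_cast by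
    calc (121 : ℕ) * n ≤ 25 * psi G := hkey
      _ = psi G * 25 := Nat.mul_comm _ _
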